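/- With notation as in the construction (g weakly increasing, μ = μ_g(k), (f_g)_i, (d_g)_i, I_g, D_g, and Pr the standard pairing), the coloring c_g(m,n) = Pr(I_g(m,n), D_g(m,n)) is g-regressive on the interval [μ, (f_g)_k(μ)), i.e., c_g(m,n) ≤ g(min{m,n}) for all μ ≤ m < n < (f_g)_k(μ), provided √(g(m))/2 > 2 for m ≥ μ. -/
import Mathlib


/-- `(f_g)_i`: `(f_g)_1 (n) = n + 1`, `(f_g)_{i+1} (n) = (f_g)_i^(⌊√(g n)/2⌋) (n)`. -/
def fg (g : ℕ → ℕ) : ℕ → ℕ → ℕ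
  | 0, n => n
  | 1, n => n + 1
  | (i + 2), n => (fg g (i + 1))^[Nat.sqrt (g n) / 2] n

/-- The semi-metric `(d_g)_i(m,n) = |{l : m < (f_g)_i^(l)(μ) ≤ n}|`. -/
noncomputable def dg (g : ℕ → ℕ) (μ i m n : ℕ) : ℕ :=
  {l : ℕ | m < (fg g i)^[l] μ ∧ (fg g i)^[l] μ ≤ n}.ncard

/-- `I_g(m,n)`: the greatest `i` with `(d_g)_i(m,n) > 0`. -/
noncomputable def Ig (g : ℕ → ℕ) (μ m n : ℕ) : ℕ := sSup {i | 0 < dg g μ i m n}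

/-- `D_g(m,n) = (d_g)_{I_g(m,n)}(m,n)`. -/
noncomputable def Dg (g : ℕ → ℕ) (μ m n : ℕ) : ℕ := dg g μ (Ig g μ m n) m n

/-- The pairing function `Pr(m,n) = C(m+n+1,2) + n`. -/
def Pr (m n : ℕ) : ℕ := Nat.choose (m + n + 1) 2 + n

/-- The coloring `c_g(m,n) = Pr(I_g(m,n), D_g(m,n))`. -/
noncomputable def cg (g : ℕ → ℕ) (μ m n : ℕ) : ℕ := Pr (Ig g μ m n) (Dg g μ m n)

/-- `H` is min-homogeneous for the pair coloring `c`. -/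
def MinHomog (c : ℕ → ℕ → ℕ) (H : Finset ℕ) : Prop :=
  ∀ m n n', m ∈ H → n ∈ H → n' ∈ H → m < n → m < n' → c m n = c m n'

section
variable (g : ℕ → ℕ)

lemma le_iter {f : ℕ → ℕ} (hf : ∀ n, n ≤ f n) (t y : ℕ) : y ≤ f^[t] y := by
  induction t generalizing y with
  | zero => simp
  | succ t ih =>
    rw [Function.iterate_succ_apply]
    exact (hf y).trans (ih (f y))

lemma fg_le : ∀ i n, n ≤ fg g i n := by
  intro i
  induction i using Nat.strong_induction_on with
  | _ i ih =>
    match i with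
    | 0 => intro n; simp [fg]
    | 1 => intro n; simp [fg]
    | (i+2) =>
      intro n
      show n ≤ (fg g (i+1))^[Nat.sqrt (g n) / 2] n
      exact le_iter (fun q => ih (i+1) (by omega) q) _ n

lemma fg_lt (hg : Monotone g) (μ : ℕ) (h1 : 1 ≤ Nat.sqrt (g μ) / 2) :
    ∀ i, 1 ≤ i → ∀ q, μ ≤ q → q < fg g i q := by
  intro i
  induction i using Nat.strong_induction_on with
  | _ i ih =>
    match i with
    | 0 => intro h; omega
    | 1 => intro _ q _; simp [fg]
    | (i+2) =>
      intro _ q hq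
      show q < (fg g (i+1))^[Nat.sqrt (g q) / 2] q
      have ht : 1 ≤ Nat.sqrt (g q) / 2 :=
        h1.trans (Nat.div_le_div_right (Nat.sqrt_le_sqrt (hg hq)))
      obtain ⟨t, htt⟩ : ∃ t, Nat.sqrt (g q) / 2 = t + 1 := ⟨_, (Nat.succ_pred_eq_of_pos ht).symm⟩
      rw [htt, Function.iterate_succ_apply]
      calc q < fg g (i+1) q := ih (i+1) (by omega) (by omega) q hq
        _ ≤ _ := le_iter (fun p => fg_le g (i+1) p) t _

lemma iter_strict (hg : Monotone g) (μ : ℕ) (h1 : 1 ≤ Nat.sqrt (g μ) / 2)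
    (i : ℕ) (hi : 1 ≤ i) : StrictMono (fun l => (fg g i)^[l] μ) := by
  apply strictMono_nat_of_lt_succ
  intro l
  have hμl : μ ≤ (fg g i)^[l] μ := le_iter (fun q => fg_le g i q) l μ
  simp only [Function.iterate_succ_apply']
  exact fg_lt g hg μ h1 i hi _ hμl

lemma fg_mono_idx (μ : ℕ) (h1 : 1 ≤ Nat.sqrt (g μ) / 2) :
    Monotone (fun i => fg g i μ) := by
  apply monotone_nat_of_le_succ
  intro i
  match i with
  | 0 => simp [fg]
  | (i+1) =>
    show fg g (i+1) μ ≤ (fg g (i+1))^[Nat.sqrt (g μ) / 2] μ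
    obtain ⟨t, htt⟩ : ∃ t, Nat.sqrt (g μ) / 2 = t + 1 := ⟨_, (Nat.succ_pred_eq_of_pos h1).symm⟩
    rw [htt, Function.iterate_succ_apply]
    exact le_iter (fun p => fg_le g (i+1) p) t _

lemma dg_zero_of_ge (hg : Monotone g) (μ k : ℕ) (h1 : 1 ≤ Nat.sqrt (g μ) / 2)
    (i m n : ℕ) (hki : k ≤ i) (hm : μ ≤ m) (hn : n < fg g k μ) :
    dg g μ i m n = 0 := by
  unfold dg
  convert Set.ncard_empty ℕ using 2
  ext l
  simp only [Set.mem_setOf_eq, Set.mem_empty_iff_false, iff_false, not_and, not_le]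
  intro hml
  match l with
  | 0 => simp at hml; omega
  | (r+1) =>
    have h2 : fg g i μ ≤ (fg g i)^[r+1] μ := by
      rw [Function.iterate_succ_apply]
      exact le_iter (fun p => fg_le g i p) r _
    have h3 : fg g k μ ≤ fg g i μ := fg_mono_idx g μ h1 hki
    omega

lemma dg_one_pos (μ m n : ℕ) (hm : μ ≤ m) (hmn : m < n) : 0 < dg g μ 1 m n := by
  have hx : ∀ l, (fg g 1)^[l] μ = μ + l := by
    intro l
    induction l with
    | zero => simp
    | succ r ih => rw [Function.iterate_succ_apply', ih]; rfl
  unfold dg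
  have hfin : {l : ℕ | m < (fg g 1)^[l] μ ∧ (fg g 1)^[l] μ ≤ n}.Finite := by
    apply Set.Finite.subset (Set.finite_Iic n)
    intro l hl
    simp only [Set.mem_setOf_eq, hx] at hl
    simp only [Set.mem_Iic]; omega
  refine (Set.ncard_pos hfin).mpr ⟨n - μ, ?_⟩
  simp only [Set.mem_setOf_eq, hx]
  omega

lemma y_eq_x (i : ℕ) (hi : 1 ≤ i) (μ : ℕ) :
    ∀ j, ∃ s, (fg g (i+1))^[j] μ = (fg g i)^[s] μ := by
  intro j
  induction j with
  | zero => exact ⟨0, rfl⟩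
  | succ j ih =>
    obtain ⟨s, hs⟩ := ih
    obtain ⟨i', rfl⟩ : ∃ i', i = i' + 1 := ⟨i - 1, by omega⟩
    refine ⟨Nat.sqrt (g ((fg g (i'+1+1))^[j] μ)) / 2 + s, ?_⟩
    rw [Function.iterate_succ_apply', Function.iterate_add_apply, ← hs]
    rfl
end

section
variable (g : ℕ → ℕ)

lemma dg_bound (hg : Monotone g) (μ : ℕ) (h1 : 1 ≤ Nat.sqrt (g μ) / 2)
    (i m n : ℕ) (hi : 1 ≤ i) (hm : μ ≤ m) (hmn : m < n)
    (h0 : dg g μ (i+1) m n = 0) :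
    dg g μ i m n ≤ Nat.sqrt (g m) / 2 := by
  set y : ℕ → ℕ := fun j => (fg g (i+1))^[j] μ with hy
  set x : ℕ → ℕ := fun l => (fg g i)^[l] μ with hxdef
  have ymono : StrictMono y := iter_strict g hg μ h1 (i+1) (by omega)
  have xmono : StrictMono x := iter_strict g hg μ h1 i hi
  set J := Nat.findGreatest (fun j => y j ≤ m) m with hJ
  have hy0 : y 0 ≤ m := by
    simp only [hy, Function.iterate_zero_apply]; exact hm
  have hpJ : y J ≤ m :=
    Nat.findGreatest_spec (P := fun j => y j ≤ m) (Nat.zero_le m) hy0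
  have hJ1 : m < y (J+1) := by
    by_cases h : J + 1 ≤ m
    · exact Nat.lt_of_not_le
        (Nat.findGreatest_is_greatest (P := fun j => y j ≤ m) (by omega) h)
    · calc m < J + 1 := by omega
        _ ≤ y (J+1) := ymono.le_apply
  have hn' : n < y (J+1) := by
    by_contra h'
    push_neg at h'
    have hfin : {l : ℕ | m < (fg g (i+1))^[l] μ ∧ (fg g (i+1))^[l] μ ≤ n}.Finite := by
      apply Set.Finite.subset (Set.finite_Iic n)
      intro l hl
      simp only [Set.mem_setOf_eq] at hl
      have : l ≤ (fg g (i+1))^[l] μ := ymono.le_apply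
      simp only [Set.mem_Iic]; omega
    unfold dg at h0
    have hemp := (Set.ncard_eq_zero hfin).mp h0
    have : (J+1) ∈ {l : ℕ | m < (fg g (i+1))^[l] μ ∧ (fg g (i+1))^[l] μ ≤ n} := ⟨hJ1, h'⟩
    rw [hemp] at this
    exact this
  obtain ⟨s, hs⟩ := y_eq_x g i hi μ J
  set t := Nat.sqrt (g (y J)) / 2 with htdef
  have hyx : y (J+1) = x (t + s) := by
    show (fg g (i+1))^[J+1] μ = (fg g i)^[t+s] μ
    rw [Function.iterate_succ_apply', Function.iterate_add_apply, ← hs]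
    obtain ⟨i', rfl⟩ : ∃ i', i = i' + 1 := ⟨i - 1, by omega⟩
    rfl
  have hsm : x s ≤ m := by
    show (fg g i)^[s] μ ≤ m
    rw [← hs]; exact hpJ
  have ht : t ≤ Nat.sqrt (g m) / 2 :=
    Nat.div_le_div_right (Nat.sqrt_le_sqrt (hg hpJ))
  unfold dg
  have hsub : {l : ℕ | m < (fg g i)^[l] μ ∧ (fg g i)^[l] μ ≤ n} ⊆ Set.Ioo s (t + s) := by
    intro l hl
    simp only [Set.mem_setOf_eq] at hl
    constructor
    · exact xmono.lt_iff_lt.mp (lt_of_le_of_lt hsm hl.1)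
    · exact xmono.lt_iff_lt.mp (lt_of_le_of_lt hl.2 (hyx ▸ hn'))
  calc {l : ℕ | m < (fg g i)^[l] μ ∧ (fg g i)^[l] μ ≤ n}.ncard
      ≤ (Set.Ioo s (t+s)).ncard := Set.ncard_le_ncard hsub (Set.finite_Ioo s (t+s))
    _ = t + s - s - 1 := by rw [← Finset.coe_Ioo, Set.ncard_coe_finset, Nat.card_Ioo]
    _ ≤ Nat.sqrt (g m) / 2 := by omega
end

theorem stmt13 (g : ℕ → ℕ) (hg : Monotone g) (k μ : ℕ) (hk : 2 < k)
    (hμ : k ≤ Nat.sqrt (g μ) / 2) (hμmin : ∀ t, k ≤ Nat.sqrt (g t) / 2 → μ ≤ t)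
    (hbig : ∀ m, μ ≤ m → (2 : ℝ) < Real.sqrt (g m) / 2)
    (m n : ℕ) (hm : μ ≤ m) (hmn : m < n) (hn : n < fg g k μ) :
    cg g μ m n ≤ g m := by
  have hk1 : 1 ≤ Nat.sqrt (g μ) / 2 := le_trans (by omega) hμ
  set l := Nat.sqrt (g m) / 2 with hl
  have hml : Nat.sqrt (g μ) / 2 ≤ l := Nat.div_le_div_right (Nat.sqrt_le_sqrt (hg hm))
  have hkl : k ≤ l := hμ.trans hml
  have h1S : 0 < dg g μ 1 m n := dg_one_pos g μ m n hm hmn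
  have hSk : ∀ i, 0 < dg g μ i m n → i < k := by
    intro i h
    by_contra h'
    rw [dg_zero_of_ge g hg μ k hk1 i m n (by omega) hm hn] at h
    omega
  have hbdd : BddAbove {i | 0 < dg g μ i m n} := ⟨k, fun i hi => (hSk i hi).le⟩
  have hIk : Ig g μ m n ≤ k := csSup_le ⟨1, h1S⟩ (fun i hi => (hSk i hi).le)
  have hI1 : 1 ≤ Ig g μ m n := le_csSup hbdd h1S
  have h0 : dg g μ (Ig g μ m n + 1) m n = 0 := by
    by_contra h
    have h2 : Ig g μ m n + 1 ≤ Ig g μ m n :=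
      le_csSup hbdd (show 0 < dg g μ (Ig g μ m n + 1) m n from Nat.pos_of_ne_zero h)
    omega
  have hD : Dg g μ m n ≤ l :=
    dg_bound g hg μ hk1 (Ig g μ m n) m n hI1 hm hmn h0
  have hI : Ig g μ m n ≤ l := hIk.trans hkl
  have hl3 : 3 ≤ l := le_trans (by omega) hkl
  have h2l : 2 * l ≤ Nat.sqrt (g m) := by
    rw [hl]; omega
  have hs2 : Nat.sqrt (g m) * Nat.sqrt (g m) ≤ g m := Nat.sqrt_le (g m)
  have hch : (2*l+1).choose 2 = 2*l*l + l := by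
    rw [Nat.choose_two_right, Nat.add_sub_cancel,
      show (2*l+1) * (2*l) = (2*l*l+l)*2 by ring, Nat.mul_div_cancel _ (by norm_num)]
  have hPr : cg g μ m n ≤ (2*l+1).choose 2 + l := by
    unfold cg Pr
    have := Nat.choose_le_choose (c := 2) (show Ig g μ m n + Dg g μ m n + 1 ≤ 2*l+1 by omega)
    omega
  rw [hch] at hPr
  nlinarith [hPr, h2l, hs2, hl3]
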